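/- arXiv:2202.09889 — 2 statements merged into one kernel-verified Lean document; each statement's English description precedes it below -/
import Mathlib

section
/- In the isotropic case Σ = I with X having singular values λ_1 ≥ … ≥ λ_n > 0 and ρλ_1²/d < 1, P(A(ρ)) − P(A(0)) = (ρ²/(d/n))·(1/n) Σ_{i=1}^n σ⁴ (λ_i²/d) / ((1 − ρλ_i²/d)² (λ_i²/d + σ²)). -/
open Matrix

/-- Squared Frobenius norm. -/
noncomputable def frobSq {m k : ℕ} (A : Matrix (Fin m) (Fin k) ℝ) : ℝ :=
  Matrix.trace (Aᵀ * A)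

/-- The dual-optimal linear estimator matrix `A(ρ)` in the isotropic case `Σ = I`. -/
noncomputable def AdualIso (n d : ℕ) (X : Matrix (Fin n) (Fin d) ℝ)
    (σ ρ : ℝ) : Matrix (Fin d) (Fin n) ℝ :=
  ((1 : Matrix (Fin d) (Fin d) ℝ)
      - (ρ * σ ^ 2) • ((1 : Matrix (Fin d) (Fin d) ℝ) - (ρ / (d : ℝ)) • (Xᵀ * X))⁻¹)
    * (Xᵀ * X + ((d : ℝ) * σ ^ 2) • 1)⁻¹ * Xᵀ

/-- Prediction error functional in the isotropic case:
`P(A) = (1/d)‖AX − I‖_F² + σ²‖A‖_F²`. -/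
noncomputable def predErrIso (n d : ℕ) (X : Matrix (Fin n) (Fin d) ℝ)
    (σ : ℝ) (A : Matrix (Fin d) (Fin n) ℝ) : ℝ :=
  (1 / (d : ℝ)) * frobSq (A * X - 1) + σ ^ 2 * frobSq A

/-!
Pushing `Xᵀ` through the inverses gives `A(ρ) = Xᵀ g_ρ(X Xᵀ)` with
`g_ρ(s) = (1 - ρσ²/(1 - ρs/d)) / (s + dσ²)`. In an eigenbasis `U` of `X Xᵀ` the error `P` then
splits into a sum over the eigenvalues `s = λᵢ²` of a quadratic in the gain, minimized by the ridge
gain `g_0(s) = 1/(s + dσ²)`. Completing the square, the excess of direction `i` is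
`s(s + dσ²)/d · (g_ρ - g_0)²`, and `g_ρ - g_0 = -ρσ²/((1 - ρs/d)(s + dσ²))`.
-/
namespace Matrix

theorem smul_one_add_smul_mul_eq {m k K : Type*} [Fintype k] [DecidableEq m] [Field K]
    {a : K} (ha : a ≠ 0) (b : K) (A : Matrix m k K) (B : Matrix k m K) :
    a • 1 + b • (A * B) = a • (1 + ((a⁻¹ * b) • A) * B) := by
  rw [smul_add, Matrix.smul_mul, smul_smul, mul_inv_cancel_left₀ ha]

variable {m k K : Type*} [Fintype m] [Fintype k] [DecidableEq m] [DecidableEq k] [Field K]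

theorem isUnit_det_smul_one_add_smul_mul_comm (A : Matrix m k K) (B : Matrix k m K) {a : K}
    (ha : a ≠ 0) (b : K) :
    IsUnit (a • 1 + b • (A * B)).det ↔ IsUnit (a • 1 + b • (B * A)).det := by
  rw [smul_one_add_smul_mul_eq ha, smul_one_add_smul_mul_eq ha, det_smul, det_smul,
    det_one_add_mul_comm, Matrix.mul_smul, Matrix.smul_mul]
  simp [isUnit_iff_ne_zero, ha]

/-- No invertibility hypothesis is needed: by Sylvester's determinant identity the two
inverted matrices are singular together, and then both sides vanish. -/
theorem inv_smul_one_add_smul_mul_mul (A : Matrix m k K) (B : Matrix k m K) {a : K}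
    (ha : a ≠ 0) (b : K) :
    (a • 1 + b • (A * B))⁻¹ * A = A * (a • 1 + b • (B * A))⁻¹ := by
  set M := a • 1 + b • (A * B)
  set N := a • 1 + b • (B * A)
  have hcomm : M * A = A * N := by
    simp only [M, N, Matrix.add_mul, Matrix.mul_add, Matrix.smul_mul, Matrix.mul_smul,
      Matrix.one_mul, Matrix.mul_one, Matrix.mul_assoc]
  by_cases hM : IsUnit M.det
  · have hN := (isUnit_det_smul_one_add_smul_mul_comm A B ha b).1 hM
    calc M⁻¹ * A = M⁻¹ * (M * A) * N⁻¹ := by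
          rw [hcomm, Matrix.mul_assoc, Matrix.mul_assoc, mul_nonsing_inv N hN, Matrix.mul_one]
      _ = A * N⁻¹ := by rw [← Matrix.mul_assoc, nonsing_inv_mul M hM, Matrix.one_mul]
  · have hN := mt (isUnit_det_smul_one_add_smul_mul_comm A B ha b).2 hM
    rw [nonsing_inv_apply_not_isUnit _ hM, nonsing_inv_apply_not_isUnit _ hN, Matrix.zero_mul,
      Matrix.mul_zero]

end Matrix

def conjDiag {ι R : Type*} [Fintype ι] [DecidableEq ι] [CommRing R]
    (U : Matrix ι ι R) (v : ι → R) : Matrix ι ι R :=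
  U * diagonal v * Uᵀ

section ConjDiag

variable {ι R : Type*} [Fintype ι] [DecidableEq ι] [CommRing R] (U : Matrix ι ι R)

theorem conjDiag_transpose (v : ι → R) : (conjDiag U v)ᵀ = conjDiag U v := by
  simp only [conjDiag, transpose_mul, transpose_transpose, diagonal_transpose, Matrix.mul_assoc]

theorem conjDiag_sub (v w : ι → R) : conjDiag U (v - w) = conjDiag U v - conjDiag U w := by
  unfold conjDiag; rw [← Matrix.sub_mul, ← Matrix.mul_sub, diagonal_sub]; rfl

theorem conjDiag_add (v w : ι → R) : conjDiag U (v + w) = conjDiag U v + conjDiag U w := by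
  unfold conjDiag; rw [← Matrix.add_mul, ← Matrix.mul_add, diagonal_add]; rfl

theorem conjDiag_smul (c : R) (v : ι → R) : conjDiag U (c • v) = c • conjDiag U v := by
  rw [conjDiag, diagonal_smul, Matrix.mul_smul, Matrix.smul_mul]; rfl

theorem conjDiag_one (hU : U * Uᵀ = 1) : conjDiag U 1 = 1 := by
  rw [conjDiag, show diagonal (1 : ι → R) = 1 from diagonal_one, Matrix.mul_one, hU]

variable {U}

theorem conjDiag_mul (hU : Uᵀ * U = 1) (v w : ι → R) :
    conjDiag U v * conjDiag U w = conjDiag U (v * w) := by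
  calc conjDiag U v * conjDiag U w = U * (diagonal v * (Uᵀ * U) * diagonal w) * Uᵀ := by
        simp only [conjDiag, Matrix.mul_assoc]
    _ = conjDiag U (v * w) := by rw [hU, Matrix.mul_one, diagonal_mul_diagonal]; rfl

theorem conjDiag_trace (hU : Uᵀ * U = 1) (v : ι → R) : (conjDiag U v).trace = ∑ i, v i := by
  rw [conjDiag, trace_mul_comm, ← Matrix.mul_assoc, hU, Matrix.one_mul, trace_diagonal]

theorem conjDiag_inv {K : Type*} [Field K] {U : Matrix ι ι K} (hU : Uᵀ * U = 1)
    (hU' : U * Uᵀ = 1) {v : ι → K} (hv : ∀ i, v i ≠ 0) : (conjDiag U v)⁻¹ = conjDiag U v⁻¹ := by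
  refine inv_eq_right_inv ?_
  rw [conjDiag_mul hU, ← conjDiag_one U hU']
  congr 1
  ext i
  simp [hv i]

end ConjDiag

theorem frobSq_sub_one {m : ℕ} (K : Matrix (Fin m) (Fin m) ℝ) :
    frobSq (K - 1) = frobSq K - 2 * K.trace + m := by
  simp only [frobSq, transpose_sub, transpose_one, Matrix.sub_mul, Matrix.mul_sub,
    Matrix.mul_one, Matrix.one_mul, trace_sub, trace_transpose, trace_one, Fintype.card_fin]
  ring

section Spectral

variable {n d : ℕ} {X : Matrix (Fin n) (Fin d) ℝ} {U : Matrix (Fin n) (Fin n) ℝ} {s : Fin n → ℝ}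

theorem AdualIso_eq_transpose_mul (σ ρ : ℝ) (hd : (d : ℝ) ≠ 0) (hσ : σ ≠ 0) :
    AdualIso n d X σ ρ = Xᵀ * ((1 - (ρ * σ ^ 2) • (1 - (ρ / d) • (X * Xᵀ))⁻¹)
      * (X * Xᵀ + ((d : ℝ) * σ ^ 2) • 1)⁻¹) := by
  have hridge : (Xᵀ * X + ((d : ℝ) * σ ^ 2) • 1)⁻¹ * Xᵀ
      = Xᵀ * (X * Xᵀ + ((d : ℝ) * σ ^ 2) • 1)⁻¹ := by
    have := inv_smul_one_add_smul_mul_mul Xᵀ X (mul_ne_zero hd (pow_ne_zero 2 hσ)) 1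
    rwa [one_smul, one_smul, add_comm, add_comm (_ • 1)] at this
  have hdual : (1 - (ρ / d) • (Xᵀ * X))⁻¹ * Xᵀ = Xᵀ * (1 - (ρ / d) • (X * Xᵀ))⁻¹ := by
    have := inv_smul_one_add_smul_mul_mul Xᵀ X one_ne_zero (-(ρ / d))
    rwa [one_smul, one_smul, neg_smul, neg_smul, ← sub_eq_add_neg, ← sub_eq_add_neg] at this
  rw [AdualIso, Matrix.mul_assoc, hridge, Matrix.sub_mul, Matrix.one_mul, Matrix.smul_mul,
    ← Matrix.mul_assoc _ Xᵀ, hdual, Matrix.mul_assoc, ← Matrix.mul_smul, ← Matrix.mul_sub,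
    Matrix.sub_mul, Matrix.one_mul, Matrix.smul_mul]

/-- The eigenvalue of `(1 - ρσ²(1 - (ρ/d)G)⁻¹)(G + dσ²)⁻¹` at an eigenvalue `s` of `G = X Xᵀ`. -/
noncomputable def dualGain (d σ ρ s : ℝ) : ℝ :=
  (1 - ρ * σ ^ 2 / (1 - ρ * s / d)) / (s + d * σ ^ 2)

theorem AdualIso_eq_transpose_mul_conjDiag (hU : Uᵀ * U = 1) (hU' : U * Uᵀ = 1)
    (hX : X * Xᵀ = conjDiag U s) (σ ρ : ℝ) (hd : (d : ℝ) ≠ 0) (hσ : σ ≠ 0)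
    (hedge : ∀ i, 1 - ρ * s i / d ≠ 0) (hridge : ∀ i, s i + d * σ ^ 2 ≠ 0) :
    AdualIso n d X σ ρ = Xᵀ * conjDiag U (fun i => dualGain d σ ρ (s i)) := by
  have hdual : 1 - (ρ / d) • (X * Xᵀ) = conjDiag U (1 - (ρ / d) • s) := by
    rw [hX, conjDiag_sub, conjDiag_smul, conjDiag_one U hU']
  have hgram : X * Xᵀ + ((d : ℝ) * σ ^ 2) • 1 = conjDiag U (s + ((d : ℝ) * σ ^ 2) • 1) := by
    rw [hX, conjDiag_add, conjDiag_smul, conjDiag_one U hU']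
  rw [AdualIso_eq_transpose_mul σ ρ hd hσ, hdual, hgram, conjDiag_inv hU hU', conjDiag_inv hU hU',
    ← conjDiag_smul, ← conjDiag_one U hU', ← conjDiag_sub, conjDiag_mul hU]
  · congr 2
    funext i
    simp only [dualGain, Pi.mul_apply, Pi.sub_apply, Pi.smul_apply, Pi.inv_apply, Pi.add_apply,
      Pi.one_apply, smul_eq_mul]
    ring
  · intro i
    simpa using hridge i
  · intro i
    simpa [div_mul_eq_mul_div] using hedge i

/-- The share of `P(Xᵀ U diag(g) Uᵀ)` carried by one eigendirection of `X Xᵀ`, with eigenvalue `s`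
and gain `g`. -/
noncomputable def modeErr (d σ s g : ℝ) : ℝ :=
  (g * s - 1) ^ 2 / d + σ ^ 2 * (g ^ 2 * s)

theorem predErrIso_transpose_mul_conjDiag (hU : Uᵀ * U = 1) (hX : X * Xᵀ = conjDiag U s)
    (σ : ℝ) (g : Fin n → ℝ) :
    predErrIso n d X σ (Xᵀ * conjDiag U g)
      = ∑ i, modeErr d σ (s i) (g i) + ((d : ℝ) - n) / d := by
  set B := conjDiag U g
  have hB : Bᵀ = B := conjDiag_transpose U g
  have hA : frobSq (Xᵀ * B) = ∑ i, g i ^ 2 * s i := by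
    rw [frobSq, transpose_mul, transpose_transpose, hB, Matrix.mul_assoc, ← Matrix.mul_assoc X,
      hX, conjDiag_mul hU, conjDiag_mul hU, conjDiag_trace hU]
    exact Finset.sum_congr rfl fun i _ => by simp only [Pi.mul_apply]; ring
  have hK : frobSq (Xᵀ * B * X) = ∑ i, (g i * s i) ^ 2 := by
    have hKt : (Xᵀ * B * X)ᵀ = Xᵀ * B * X := by
      rw [transpose_mul, transpose_mul, transpose_transpose, hB, Matrix.mul_assoc]
    rw [frobSq, hKt]
    calc trace (Xᵀ * B * X * (Xᵀ * B * X)) = trace (Xᵀ * (B * (X * Xᵀ) * B * X)) := by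
          simp only [Matrix.mul_assoc]
      _ = trace (B * (X * Xᵀ) * B * (X * Xᵀ)) := by
          rw [trace_mul_comm]; simp only [Matrix.mul_assoc]
      _ = _ := by
          rw [hX, conjDiag_mul hU, conjDiag_mul hU, conjDiag_mul hU, conjDiag_trace hU]
          exact Finset.sum_congr rfl fun i _ => by simp only [Pi.mul_apply]; ring
  have htr : trace (Xᵀ * B * X) = ∑ i, g i * s i := by
    rw [Matrix.mul_assoc, trace_mul_comm, Matrix.mul_assoc, hX, conjDiag_mul hU, conjDiag_trace hU]
    rfl
  rw [predErrIso, Matrix.mul_assoc, ← Matrix.mul_assoc Xᵀ, frobSq_sub_one, hK, htr, hA]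
  simp only [modeErr, Finset.sum_add_distrib, ← Finset.sum_div, ← Finset.mul_sum]
  have hsq : ∑ i, (g i * s i - 1) ^ 2 = ∑ i, (g i * s i) ^ 2 - 2 * ∑ i, g i * s i + n := by
    simp only [sub_sq, mul_one, one_pow, Finset.sum_add_distrib, Finset.sum_sub_distrib,
      ← Finset.mul_sum, Finset.sum_const, Finset.card_univ, Fintype.card_fin, nsmul_eq_mul]
  rw [hsq]
  ring

end Spectral

theorem modeErr_sub_modeErr_inv {d σ s : ℝ} (hd : d ≠ 0) (hs : s + d * σ ^ 2 ≠ 0) (g : ℝ) :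
    modeErr d σ s g - modeErr d σ s (s + d * σ ^ 2)⁻¹
      = s * (s + d * σ ^ 2) / d * (g - (s + d * σ ^ 2)⁻¹) ^ 2 := by
  unfold modeErr
  field_simp
  ring

theorem dualGain_zero (d σ s : ℝ) : dualGain d σ 0 s = (s + d * σ ^ 2)⁻¹ := by
  simp [dualGain]

theorem dualGain_sub_inv {d σ ρ s : ℝ} (hedge : 1 - ρ * s / d ≠ 0) :
    dualGain d σ ρ s - (s + d * σ ^ 2)⁻¹ = -(ρ * σ ^ 2 / ((1 - ρ * s / d) * (s + d * σ ^ 2))) := by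
  unfold dualGain
  field_simp
  ring

theorem modeErr_dualGain_sub_modeErr_dualGain_zero {d σ ρ s : ℝ} (hd : d ≠ 0)
    (hedge : 1 - ρ * s / d ≠ 0) (hs : s + d * σ ^ 2 ≠ 0) :
    modeErr d σ s (dualGain d σ ρ s) - modeErr d σ s (dualGain d σ 0 s)
      = ρ ^ 2 / d * (σ ^ 4 * (s / d) / ((1 - ρ * s / d) ^ 2 * (s / d + σ ^ 2))) := by
  rw [dualGain_zero, modeErr_sub_modeErr_inv hd hs, dualGain_sub_inv hedge]
  field_simp

theorem stmt8_general (n d : ℕ) (hn : 0 < n) (hd : 0 < d)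
    (X : Matrix (Fin n) (Fin d) ℝ)
    (σ ρ : ℝ) (hσ : 0 < σ) (hρ : 0 ≤ ρ)
    (l : Fin n → ℝ) (hlpos : ∀ i, 0 < l i) (hlmono : Antitone l)
    (U : Matrix (Fin n) (Fin n) ℝ) (hU : U * Uᵀ = 1 ∧ Uᵀ * U = 1)
    (hsvd : X * Xᵀ = U * Matrix.diagonal (fun i => (l i) ^ 2) * Uᵀ)
    (hedge : ρ * (l ⟨0, hn⟩) ^ 2 / (d : ℝ) < 1) :
    predErrIso n d X σ (AdualIso n d X σ ρ) - predErrIso n d X σ (AdualIso n d X σ 0)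
      = (ρ ^ 2 / ((d : ℝ) / (n : ℝ))) * ((1 / (n : ℝ)) *
          ∑ i, σ ^ 4 * ((l i) ^ 2 / (d : ℝ)) /
            ((1 - ρ * (l i) ^ 2 / (d : ℝ)) ^ 2 * ((l i) ^ 2 / (d : ℝ) + σ ^ 2))) := by
  obtain ⟨hU', hU⟩ := hU
  have hd' : (d : ℝ) ≠ 0 := by positivity
  have hridge : ∀ i, l i ^ 2 + d * σ ^ 2 ≠ 0 := fun i => by have := hlpos i; positivity
  have hedgeρ : ∀ i, 1 - ρ * l i ^ 2 / d ≠ 0 := fun i => by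
    refine (sub_pos.2 (lt_of_le_of_lt ?_ hedge)).ne'
    have := hlpos i
    gcongr
    exact hlmono (show (⟨0, hn⟩ : Fin n) ≤ i from Nat.zero_le _)
  have hedge0 : ∀ i, 1 - 0 * l i ^ 2 / (d : ℝ) ≠ 0 := by simp
  rw [AdualIso_eq_transpose_mul_conjDiag hU hU' hsvd σ ρ hd' hσ.ne' hedgeρ hridge,
    AdualIso_eq_transpose_mul_conjDiag hU hU' hsvd σ 0 hd' hσ.ne' hedge0 hridge,
    predErrIso_transpose_mul_conjDiag hU hsvd, predErrIso_transpose_mul_conjDiag hU hsvd,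
    add_sub_add_right_eq_sub, ← Finset.sum_sub_distrib, Finset.mul_sum, Finset.mul_sum]
  refine Finset.sum_congr rfl fun i _ => ?_
  rw [modeErr_dualGain_sub_modeErr_dualGain_zero hd' (hedgeρ i) (hridge i)]
  field_simp

/-- In the isotropic case, with singular values `λ₁ ≥ … ≥ λₙ > 0` of `X` and
`ρ λ₁²/d < 1`,
`P(A(ρ)) − P(A(0)) = (ρ²/(d/n))·(1/n) ∑ᵢ σ⁴ (λᵢ²/d) / ((1 − ρλᵢ²/d)² (λᵢ²/d + σ²))`. -/
theorem stmt8 (n d : ℕ) (hn : 0 < n) (hnd : n ≤ d) (hd : 0 < d)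
    (X : Matrix (Fin n) (Fin d) ℝ)
    (σ ρ : ℝ) (hσ : 0 < σ) (hρ : 0 ≤ ρ)
    (l : Fin n → ℝ) (hlpos : ∀ i, 0 < l i) (hlmono : Antitone l)
    (U : Matrix (Fin n) (Fin n) ℝ) (hU : U * Uᵀ = 1 ∧ Uᵀ * U = 1)
    (hsvd : X * Xᵀ = U * Matrix.diagonal (fun i => (l i) ^ 2) * Uᵀ)
    (hedge : ρ * (l ⟨0, hn⟩) ^ 2 / (d : ℝ) < 1) :
    predErrIso n d X σ (AdualIso n d X σ ρ) - predErrIso n d X σ (AdualIso n d X σ 0)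
      = (ρ ^ 2 / ((d : ℝ) / (n : ℝ))) * ((1 / (n : ℝ)) *
          ∑ i, σ ^ 4 * ((l i) ^ 2 / (d : ℝ)) /
            ((1 - ρ * (l i) ^ 2 / (d : ℝ)) ^ 2 * ((l i) ^ 2 / (d : ℝ) + σ ^ 2))) :=
  stmt8_general n d hn hd X σ ρ hσ hρ l hlpos hlmono U hU hsvd hedge
end

section
/- Let H be the Marchenko–Pastur law with γ > 1 and σ > 0. Suppose ρ ∈ [0, 1/λ₊) satisfies ∫ σ⁴/((1 − ρs)²(s + σ²)) dH(s) = ε² with ε² ≥ 2σ⁴/(λ₋ + σ²). Then ρ ≥ (1 − 1/√2)/λ₊, and consequently (ρ²/γ)∫ σ⁴ s/((1 − ρs)²(s + σ²)) dH(s) ≥ ((1 − 1/√2)² λ₋ / (λ₊² γ)) · ε². -/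
open MeasureTheory Real Filter

/-- Lower edge `λ₋ = (1 − 1/√γ)²` of the Marchenko–Pastur law. -/
noncomputable def lamM (γ : ℝ) : ℝ := (1 - 1 / Real.sqrt γ) ^ 2

/-- Upper edge `λ₊ = (1 + 1/√γ)²` of the Marchenko–Pastur law. -/
noncomputable def lamP (γ : ℝ) : ℝ := (1 + 1 / Real.sqrt γ) ^ 2

/-- The Marchenko–Pastur law with aspect ratio `γ > 1`:
`dH(s) = (γ/(2π))·√((λ₊ − s)(s − λ₋))/s · 𝟙_{[λ₋,λ₊]}(s) ds`. -/
noncomputable def MPlaw (γ : ℝ) : Measure ℝ :=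
  MeasureTheory.volume.withDensity fun s =>
    ENNReal.ofReal (if lamM γ ≤ s ∧ s ≤ lamP γ then
      γ / (2 * Real.pi) * Real.sqrt ((lamP γ - s) * (s - lamM γ)) / s else 0)

/-!
The Marchenko–Pastur law is a probability measure carried by `[λ₋, λ₊]`; its total mass is
computed from an explicit arcsine primitive of `√((b - s)(s - a))/s`. On `[λ₋, λ₊]` the integrand
`σ⁴/((1 − ρs)²(s + σ²))` is at most `σ⁴/((1 − ρλ₊)²(λ₋ + σ²))`, so integrating against a
probability measure, the lower bound on `ε²` forces `2(1 − ρλ₊)² ≤ 1`, i.e. `ρλ₊ ≥ 1 − 1/√2`.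
For the second claim, `s ≥ λ₋` on the support gives `∫ σ⁴s/((1 − ρs)²(s + σ²)) dH ≥ λ₋ ε²`.
-/

open Set

section Primitive

variable {a b x : ℝ}

theorem hasDerivAt_arcsin_comp_of_one_sub_sq_eq {u : ℝ → ℝ} {u' c : ℝ}
    (hu : HasDerivAt u u' x) (hc : 0 < c) (hsq : 1 - u x ^ 2 = c ^ 2) :
    HasDerivAt (fun s => arcsin (u s)) (u' / c) x := by
  have hpos : 0 < 1 - u x ^ 2 := hsq ▸ pow_pos hc 2
  have h := (hasDerivAt_arcsin (fun h => by rw [h] at hpos; norm_num at hpos)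
    (fun h => by rw [h] at hpos; norm_num at hpos)).comp x hu
  rwa [hsq, sqrt_sq hc.le, one_div_mul_eq_div] at h

theorem hasDerivAt_sqrt_sub_mul_sub (hx : x ∈ Ioo a b) :
    HasDerivAt (fun s => √((b - s) * (s - a)))
      ((a + b - 2 * x) / (2 * √((b - x) * (x - a)))) x := by
  have hQ : (b - x) * (x - a) ≠ 0 := by nlinarith [hx.1, hx.2]
  have hpoly : HasDerivAt (fun s => (b - s) * (s - a)) (a + b - 2 * x) x := by
    exact (((hasDerivAt_id' x).const_sub b).mul ((hasDerivAt_id' x).sub_const a)).congr_deriv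
      (by ring)
  exact hpoly.sqrt hQ

theorem hasDerivAt_arcsin_affine (hx : x ∈ Ioo a b) :
    HasDerivAt (fun s => arcsin ((2 * s - (a + b)) / (b - a)))
      (1 / √((b - x) * (x - a))) x := by
  obtain ⟨hax, hxb⟩ := hx
  have hQ : 0 < (b - x) * (x - a) := by nlinarith
  have hba : 0 < b - a := by linarith
  have hu : HasDerivAt (fun s => (2 * s - (a + b)) / (b - a)) (2 / (b - a)) x := by
    simpa using (((hasDerivAt_id x).const_mul 2).sub_const (a + b)).div_const (b - a)
  have hq := sqrt_pos.2 hQ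
  convert hasDerivAt_arcsin_comp_of_one_sub_sq_eq hu
    (c := 2 * √((b - x) * (x - a)) / (b - a)) (by positivity) ?_ using 1
  · field_simp
  · simp only [div_pow, mul_pow, sq_sqrt hQ.le]
    field_simp
    ring

theorem hasDerivAt_arcsin_moebius (ha : 0 < a) (hx : x ∈ Ioo a b) :
    HasDerivAt (fun s => arcsin (((a + b) * s - 2 * (a * b)) / ((b - a) * s)))
      (√(a * b) / (x * √((b - x) * (x - a)))) x := by
  obtain ⟨hax, hxb⟩ := hx
  have hx0 : 0 < x := ha.trans hax
  have hQ : 0 < (b - x) * (x - a) := by nlinarith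
  have hba : 0 < b - a := by linarith
  have hab : 0 < a * b := mul_pos ha (hax.trans hxb |> ha.trans)
  have hu : HasDerivAt (fun s => ((a + b) * s - 2 * (a * b)) / ((b - a) * s))
      (2 * (a * b) / ((b - a) * x ^ 2)) x := by
    refine ((((hasDerivAt_id' x).const_mul (a + b)).sub_const (2 * (a * b))).div
      ((hasDerivAt_id' x).const_mul (b - a)) (mul_pos hba hx0).ne').congr_deriv ?_
    field_simp
    ring
  have hq := sqrt_pos.2 hQ
  have hg := sqrt_pos.2 hab
  convert hasDerivAt_arcsin_comp_of_one_sub_sq_eq hu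
    (c := 2 * √(a * b) * √((b - x) * (x - a)) / ((b - a) * x)) (by positivity) ?_ using 1
  · field_simp
    rw [sq_sqrt hab.le]
  · simp only [div_pow, mul_pow, sq_sqrt hQ.le, sq_sqrt hab.le]
    field_simp
    ring

noncomputable def sqrtQuadDivPrimitive (a b s : ℝ) : ℝ :=
  √((b - s) * (s - a)) + (a + b) / 2 * arcsin ((2 * s - (a + b)) / (b - a))
    - √(a * b) * arcsin (((a + b) * s - 2 * (a * b)) / ((b - a) * s))

theorem hasDerivAt_sqrtQuadDivPrimitive (ha : 0 < a) (hx : x ∈ Ioo a b) :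
    HasDerivAt (sqrtQuadDivPrimitive a b) (√((b - x) * (x - a)) / x) x := by
  have hx0 : 0 < x := ha.trans hx.1
  have hb : 0 < b := hx0.trans hx.2
  have hQ : 0 < (b - x) * (x - a) := by nlinarith [hx.1, hx.2]
  have hq := sqrt_pos.2 hQ
  refine (((hasDerivAt_sqrt_sub_mul_sub hx).add
    ((hasDerivAt_arcsin_affine hx).const_mul ((a + b) / 2))).sub
    ((hasDerivAt_arcsin_moebius ha hx).const_mul √(a * b))).congr_deriv ?_
  field_simp
  rw [sq_sqrt (by positivity), sq_sqrt hQ.le]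
  ring

theorem continuousOn_sqrtQuadDivPrimitive (ha : 0 < a) (hab : a < b) :
    ContinuousOn (sqrtQuadDivPrimitive a b) (Icc a b) := by
  have hden : ∀ s ∈ Icc a b, (b - a) * s ≠ 0 := fun s hs =>
    (mul_pos (sub_pos.2 hab) (ha.trans_le hs.1)).ne'
  unfold sqrtQuadDivPrimitive
  fun_prop (disch := assumption)

theorem integral_sqrt_sub_mul_sub_div (ha : 0 < a) (hab : a < b) :
    ∫ s in a..b, √((b - s) * (s - a)) / s = π * ((a + b) / 2 - √(a * b)) := by
  have hint : IntervalIntegrable (fun s => √((b - s) * (s - a)) / s) volume a b := by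
    refine ContinuousOn.intervalIntegrable ?_
    rw [uIcc_of_le hab.le]
    exact ContinuousOn.div (by fun_prop) continuousOn_id fun s hs => (ha.trans_le hs.1).ne'
  rw [intervalIntegral.integral_eq_sub_of_hasDeriv_right_of_le hab.le
    (continuousOn_sqrtQuadDivPrimitive ha hab)
    (fun x hx => (hasDerivAt_sqrtQuadDivPrimitive ha hx).hasDerivWithinAt) hint]
  have hba : b - a ≠ 0 := by linarith
  have hb : b ≠ 0 := by linarith
  simp only [sqrtQuadDivPrimitive, sub_self, zero_mul, mul_zero, sqrt_zero, zero_add]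
  rw [show (2 * b - (a + b)) / (b - a) = 1 by field_simp; ring,
    show ((a + b) * b - 2 * (a * b)) / ((b - a) * b) = 1 by field_simp; ring,
    show (2 * a - (a + b)) / (b - a) = -1 by field_simp; ring,
    show ((a + b) * a - 2 * (a * b)) / ((b - a) * a) = -1 by field_simp; ring,
    arcsin_one, arcsin_neg_one]
  ring

end Primitive

section MarchenkoPastur

variable {γ : ℝ}

theorem one_div_sqrt_mem_Ioo (hγ : 1 < γ) : 1 / √γ ∈ Ioo 0 1 := by
  have h1 : 1 < √γ := by simpa using sqrt_lt_sqrt zero_le_one hγ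
  exact ⟨by positivity, (div_lt_one (by linarith)).2 h1⟩

theorem lamM_pos (hγ : 1 < γ) : 0 < lamM γ := by
  have ht := one_div_sqrt_mem_Ioo hγ
  have : 0 < 1 - 1 / √γ := by linarith [ht.2]
  unfold lamM
  positivity

theorem lamM_lt_lamP (hγ : 1 < γ) : lamM γ < lamP γ := by
  have ht := one_div_sqrt_mem_Ioo hγ
  unfold lamM lamP
  nlinarith [ht.1, ht.2]

theorem lamP_pos (hγ : 1 < γ) : 0 < lamP γ := (lamM_pos hγ).trans (lamM_lt_lamP hγ)

theorem half_add_sub_sqrt_lamM_mul_lamP (hγ : 1 ≤ γ) :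
    (lamM γ + lamP γ) / 2 - √(lamM γ * lamP γ) = 2 / γ := by
  have hγ0 : 0 < γ := by linarith
  have ht : (1 / √γ) ^ 2 = 1 / γ := by rw [div_pow, one_pow, sq_sqrt hγ0.le]
  have hprod : lamM γ * lamP γ = (1 - 1 / γ) ^ 2 := by
    unfold lamM lamP
    rw [← ht]
    ring
  rw [hprod, sqrt_sq (sub_nonneg.2 ((div_le_one hγ0).2 hγ))]
  unfold lamM lamP
  rw [add_sq, sub_sq, ht]
  ring

theorem MPlaw_eq_withDensity_restrict (γ : ℝ) :
    MPlaw γ = (volume.restrict (Icc (lamM γ) (lamP γ))).withDensity fun s =>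
      ENNReal.ofReal (γ / (2 * π) * (√((lamP γ - s) * (s - lamM γ)) / s)) := by
  rw [MPlaw, ← withDensity_indicator measurableSet_Icc]
  congr 1
  ext s
  simp only [indicator_apply, mem_Icc]
  split_ifs
  · rw [mul_div_assoc]
  · exact ENNReal.ofReal_zero

theorem ae_mem_Icc_MPlaw (γ : ℝ) : ∀ᵐ s ∂MPlaw γ, s ∈ Icc (lamM γ) (lamP γ) := by
  rw [MPlaw_eq_withDensity_restrict]
  exact (withDensity_absolutelyContinuous _ _).ae_le (ae_restrict_mem measurableSet_Icc)

theorem isProbabilityMeasure_MPlaw (hγ : 1 < γ) : IsProbabilityMeasure (MPlaw γ) := by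
  have ha := lamM_pos hγ
  have hab := lamM_lt_lamP hγ
  have hγ0 : 0 < γ := by linarith
  have hcont : ContinuousOn (fun s => γ / (2 * π) * (√((lamP γ - s) * (s - lamM γ)) / s))
      (Icc (lamM γ) (lamP γ)) :=
    continuousOn_const.mul (ContinuousOn.div (by fun_prop) continuousOn_id
      fun s hs => (ha.trans_le hs.1).ne')
  have hnonneg : 0 ≤ᵐ[volume.restrict (Icc (lamM γ) (lamP γ))]
      fun s => γ / (2 * π) * (√((lamP γ - s) * (s - lamM γ)) / s) := by
    filter_upwards [ae_restrict_mem measurableSet_Icc] with s hs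
    have := ha.trans_le hs.1
    positivity
  constructor
  rw [MPlaw_eq_withDensity_restrict, withDensity_apply _ MeasurableSet.univ,
    Measure.restrict_univ, ← ofReal_integral_eq_lintegral_ofReal
      (hcont.integrableOn_compact isCompact_Icc) hnonneg,
    integral_Icc_eq_integral_Ioc, ← intervalIntegral.integral_of_le hab.le,
    intervalIntegral.integral_const_mul, integral_sqrt_sub_mul_sub_div ha hab,
    half_add_sub_sqrt_lamM_mul_lamP hγ.le]
  field_simp
  exact ENNReal.ofReal_one

end MarchenkoPastur

theorem le_one_div_sqrt_two_of_two_mul_sq_le_one {t : ℝ} (h : 2 * t ^ 2 ≤ 1) :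
    t ≤ 1 / √2 := by
  calc t ≤ √(t ^ 2) := le_sqrt_of_sq_le le_rfl
    _ ≤ √(1 / 2) := sqrt_le_sqrt (by linarith)
    _ = 1 / √2 := by rw [sqrt_div' _ zero_le_two, sqrt_one]

theorem integrable_of_continuousOn_of_ae_mem {μ : Measure ℝ} [IsFiniteMeasure μ] {K : Set ℝ}
    {f : ℝ → ℝ} (hK : IsCompact K) (hf : ContinuousOn f K) (hμ : ∀ᵐ s ∂μ, s ∈ K) :
    Integrable f μ := by
  rw [← Measure.restrict_eq_self_of_ae_mem hμ]
  exact hf.integrableOn_compact hK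

/-- The integrand of `ε² = ∫ σ⁴/((1 − ρs)²(s + σ²)) dH(s)`. -/
noncomputable def errorIntegrand (σ ρ s : ℝ) : ℝ := σ ^ 4 / ((1 - ρ * s) ^ 2 * (s + σ ^ 2))

section ErrorIntegrand

variable {a b σ ρ s : ℝ}

theorem errorIntegrand_nonneg (ha : 0 ≤ a) (hs : a ≤ s) : 0 ≤ errorIntegrand σ ρ s := by
  have : 0 ≤ s := ha.trans hs
  unfold errorIntegrand
  positivity

theorem errorIntegrand_le (ha : 0 < a) (hρ : 0 ≤ ρ) (hρb : ρ * b < 1) (hs : s ∈ Icc a b) :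
    errorIntegrand σ ρ s ≤ σ ^ 4 / ((1 - ρ * b) ^ 2 * (a + σ ^ 2)) := by
  have hρs : 1 - ρ * b ≤ 1 - ρ * s := by nlinarith [hs.2]
  have hb : 0 < 1 - ρ * b := by linarith
  unfold errorIntegrand
  gcongr
  linarith [hs.1]

theorem continuousOn_errorIntegrand (ha : 0 < a) (hρ : 0 ≤ ρ) (hρb : ρ * b < 1) :
    ContinuousOn (errorIntegrand σ ρ) (Icc a b) := by
  refine continuousOn_const.div (by fun_prop) fun s hs => ?_
  have : 0 < 1 - ρ * s := by nlinarith [hs.2]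
  have : 0 < s := ha.trans_le hs.1
  positivity

variable {μ : Measure ℝ}

theorem integral_errorIntegrand_le [IsProbabilityMeasure μ] (ha : 0 < a) (hρ : 0 ≤ ρ)
    (hρb : ρ * b < 1) (hμ : ∀ᵐ s ∂μ, s ∈ Icc a b) :
    ∫ s, errorIntegrand σ ρ s ∂μ ≤ σ ^ 4 / ((1 - ρ * b) ^ 2 * (a + σ ^ 2)) := by
  calc ∫ s, errorIntegrand σ ρ s ∂μ
      ≤ ∫ _, σ ^ 4 / ((1 - ρ * b) ^ 2 * (a + σ ^ 2)) ∂μ := by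
        refine integral_mono_ae (integrable_of_continuousOn_of_ae_mem isCompact_Icc
          (continuousOn_errorIntegrand ha hρ hρb) hμ) (integrable_const _) ?_
        filter_upwards [hμ] with s hs using errorIntegrand_le ha hρ hρb hs
    _ = σ ^ 4 / ((1 - ρ * b) ^ 2 * (a + σ ^ 2)) := by simp

theorem one_sub_one_div_sqrt_two_div_le [IsProbabilityMeasure μ] (hσ : σ ≠ 0) (ha : 0 < a)
    (hab : a ≤ b) (hρ : 0 ≤ ρ) (hρb : ρ * b < 1) (hμ : ∀ᵐ s ∂μ, s ∈ Icc a b)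
    (hε : 2 * σ ^ 4 / (a + σ ^ 2) ≤ ∫ s, errorIntegrand σ ρ s ∂μ) :
    (1 - 1 / √2) / b ≤ ρ := by
  have hb : 0 < b := ha.trans_le hab
  have hσa : 0 < a + σ ^ 2 := by positivity
  have hσ4 : 0 < σ ^ 4 := by positivity
  have hρb' : 0 < 1 - ρ * b := by linarith
  have h := hε.trans (integral_errorIntegrand_le ha hρ hρb hμ)
  rw [div_le_div_iff₀ hσa (by positivity), mul_comm (σ ^ 4), ← mul_assoc] at h
  have h2 : 2 * (1 - ρ * b) ^ 2 ≤ 1 := by nlinarith [mul_pos hσ4 hσa]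
  rw [div_le_iff₀ hb]
  linarith [le_one_div_sqrt_two_of_two_mul_sq_le_one h2]

theorem mul_integral_errorIntegrand_le [IsFiniteMeasure μ] (ha : 0 < a) (hρ : 0 ≤ ρ)
    (hρb : ρ * b < 1) (hμ : ∀ᵐ s ∂μ, s ∈ Icc a b) :
    a * ∫ s, errorIntegrand σ ρ s ∂μ ≤ ∫ s, σ ^ 4 * s / ((1 - ρ * s) ^ 2 * (s + σ ^ 2)) ∂μ := by
  have hcont := continuousOn_errorIntegrand (σ := σ) ha hρ hρb
  rw [← integral_const_mul]
  refine integral_mono_ae ((integrable_of_continuousOn_of_ae_mem isCompact_Icc hcont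
    hμ).const_mul a) (integrable_of_continuousOn_of_ae_mem isCompact_Icc
    (continuousOn_id.mul hcont) hμ |>.congr (ae_of_all _ fun s => ?_)) ?_
  · simp only [Pi.mul_apply, id, errorIntegrand]
    ring
  · filter_upwards [hμ] with s hs
    calc a * errorIntegrand σ ρ s ≤ s * errorIntegrand σ ρ s :=
          mul_le_mul_of_nonneg_right hs.1 (errorIntegrand_nonneg ha.le hs.1)
      _ = σ ^ 4 * s / ((1 - ρ * s) ^ 2 * (s + σ ^ 2)) := by
        unfold errorIntegrand
        ring

end ErrorIntegrand

/-- If `ρ ∈ [0, 1/λ₊)` solves `∫ σ⁴/((1 − ρs)²(s + σ²)) dH(s) = ε²` with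
`ε² ≥ 2σ⁴/(λ₋ + σ²)`, then `ρ ≥ (1 − 1/√2)/λ₊` and the limiting cost
`(ρ²/γ)∫ σ⁴s/((1 − ρs)²(s + σ²)) dH(s)` is at least `((1 − 1/√2)²λ₋/(λ₊²γ))·ε²`. -/
theorem stmt13 (γ σ ρ ε2 : ℝ) (hγ : 1 < γ) (hσ : 0 < σ)
    (hρ : ρ ∈ Set.Ico 0 (1 / lamP γ))
    (heq : ∫ s, σ ^ 4 / ((1 - ρ * s) ^ 2 * (s + σ ^ 2)) ∂(MPlaw γ) = ε2)
    (hε : 2 * σ ^ 4 / (lamM γ + σ ^ 2) ≤ ε2) :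
    (1 - 1 / Real.sqrt 2) / lamP γ ≤ ρ ∧
    ((1 - 1 / Real.sqrt 2) ^ 2 * lamM γ / (lamP γ ^ 2 * γ)) * ε2 ≤
      (ρ ^ 2 / γ) * ∫ s, σ ^ 4 * s / ((1 - ρ * s) ^ 2 * (s + σ ^ 2)) ∂(MPlaw γ) := by
  obtain ⟨hρ0, hρb⟩ := hρ
  have ha := lamM_pos hγ
  have hb := lamP_pos hγ
  have hρb' : ρ * lamP γ < 1 := (lt_div_iff₀ hb).1 hρb
  have := isProbabilityMeasure_MPlaw hγ
  have hρ_ge : (1 - 1 / √2) / lamP γ ≤ ρ :=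
    one_sub_one_div_sqrt_two_div_le hσ.ne' ha (lamM_lt_lamP hγ).le hρ0 hρb'
      (ae_mem_Icc_MPlaw γ) (heq ▸ hε)
  refine ⟨hρ_ge, ?_⟩
  have hcost : lamM γ * ε2 ≤ ∫ s, σ ^ 4 * s / ((1 - ρ * s) ^ 2 * (s + σ ^ 2)) ∂(MPlaw γ) :=
    heq ▸ mul_integral_errorIntegrand_le ha hρ0 hρb' (ae_mem_Icc_MPlaw γ)
  have hε0 : 0 ≤ ε2 := (by positivity : 0 ≤ 2 * σ ^ 4 / (lamM γ + σ ^ 2)).trans hε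
  have hc : 0 ≤ 1 - 1 / √2 := sub_nonneg.2 ((div_le_one (by positivity)).2 one_lt_sqrt_two.le)
  calc ((1 - 1 / √2) ^ 2 * lamM γ / (lamP γ ^ 2 * γ)) * ε2
      = ((1 - 1 / √2) / lamP γ) ^ 2 * (lamM γ * ε2) / γ := by ring
    _ ≤ ρ ^ 2 * (lamM γ * ε2) / γ := by gcongr
    _ ≤ (ρ ^ 2 / γ) * ∫ s, σ ^ 4 * s / ((1 - ρ * s) ^ 2 * (s + σ ^ 2)) ∂(MPlaw γ) := by
      rw [mul_div_right_comm]
      gcongr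
end
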